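/- For each n ≥ 2 there exists a unique λ*(n) ∈ (0,1) such that W_C(λ) < W_D for λ < λ*(n), W_C(λ*(n)) = W_D, and W_C(λ) > W_D for λ ∈ (λ*(n), 1), where W_C(λ) = n/(1−λ) + n²φ²/(2K_C(1−λ)²) and W_D = n + n²φ²/(2K_D). -/
import Mathlib


/-- Existence and uniqueness of the complementarity threshold λ*(n) ∈ (0,1)
at which centralized welfare crosses decentralized welfare, with the strict
sign pattern on either side. -/
theorem stmt5 (n phi KC KD : ℝ) (hn : 2 ≤ n) (hphi : 0 < phi)
    (hKD : 0 < KD) (hK : KD < KC) :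
    let WC : ℝ → ℝ := fun lam =>
      n / (1 - lam) + n ^ 2 * phi ^ 2 / (2 * KC * (1 - lam) ^ 2)
    let WD : ℝ := n + n ^ 2 * phi ^ 2 / (2 * KD)
    ∃! lamstar : ℝ, lamstar ∈ Set.Ioo (0:ℝ) 1 ∧
      (∀ lam : ℝ, 0 ≤ lam → lam < lamstar → WC lam < WD) ∧
      WC lamstar = WD ∧
      (∀ lam : ℝ, lamstar < lam → lam < 1 → WD < WC lam) := by
  intro WC WD
  have hn0 : (0:ℝ) < n := by linarith
  have hKC : (0:ℝ) < KC := lt_trans hKD hK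
  have hP : 0 < n ^ 2 * phi ^ 2 := by positivity
  have hWDn : n < WD := by
    have : 0 < n ^ 2 * phi ^ 2 / (2 * KD) := by positivity
    simp only [WD]; linarith
  have hWD0 : 0 < WD := lt_trans hn0 hWDn
  -- strict monotonicity of WC on [0,1)
  have mono : ∀ a b : ℝ, 0 ≤ a → a < b → b < 1 → WC a < WC b := by
    intro a b ha hab hb1
    have h1b : 0 < 1 - b := by linarith
    have h1a : 0 < 1 - a := by linarith
    have e1 : n / (1 - a) < n / (1 - b) :=
      div_lt_div_of_pos_left hn0 h1b (by linarith)
    have e2 : n ^ 2 * phi ^ 2 / (2 * KC * (1 - a) ^ 2)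
        < n ^ 2 * phi ^ 2 / (2 * KC * (1 - b) ^ 2) := by
      apply div_lt_div_of_pos_left hP
      · positivity
      · nlinarith [mul_pos (mul_pos (sub_pos.mpr hab) (show (0:ℝ) < 2 - a - b by linarith)) hKC]
    simp only [WC]; linarith
  -- the point b where WC exceeds WD
  set b : ℝ := 1 - n / WD with hbdef
  have hnWD : 0 < n / WD := by positivity
  have hnWD1 : n / WD < 1 := (div_lt_one hWD0).mpr hWDn
  have hb0 : 0 < b := by simp only [hbdef]; linarith
  have hb1 : b < 1 := by simp only [hbdef]; linarith
  have h1b : 1 - b = n / WD := by simp only [hbdef]; ring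
  have hWC0 : WC 0 < WD := by
    have e2 : n ^ 2 * phi ^ 2 / (2 * KC) < n ^ 2 * phi ^ 2 / (2 * KD) :=
      div_lt_div_of_pos_left hP (by positivity) (by linarith)
    simp only [WC, WD]
    norm_num
    linarith
  have hWCb : WD < WC b := by
    have e : n / (n / WD) = WD := by
      rw [div_div_eq_mul_div, mul_comm, mul_div_assoc, div_self hn0.ne', mul_one]
    have pos : 0 < n ^ 2 * phi ^ 2 / (2 * KC * (n / WD) ^ 2) := by positivity
    simp only [WC, h1b, e]
    linarith
  have cont : ContinuousOn WC (Set.Icc 0 b) := by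
    apply ContinuousOn.add
    · apply ContinuousOn.div continuousOn_const (by fun_prop)
      intro x hx
      have := hx.2
      have : 0 < 1 - x := by linarith
      positivity
    · apply ContinuousOn.div continuousOn_const (by fun_prop)
      intro x hx
      have := hx.2
      have : 0 < 1 - x := by linarith
      positivity
  have hmem : WD ∈ Set.Icc (WC 0) (WC b) := ⟨hWC0.le, hWCb.le⟩
  obtain ⟨l, hl, hlWD⟩ := intermediate_value_Icc hb0.le cont hmem
  have hl0 : 0 < l := by
    rcases lt_or_eq_of_le hl.1 with h | h
    · exact h
    · exfalso; rw [← h] at hlWD; linarith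
  have hl1 : l < 1 := lt_of_le_of_lt hl.2 hb1
  have left : ∀ lam : ℝ, 0 ≤ lam → lam < l → WC lam < WD := by
    intro lam h0 hlt
    rw [← hlWD]; exact mono lam l h0 hlt hl1
  have right : ∀ lam : ℝ, l < lam → lam < 1 → WD < WC lam := by
    intro lam hlt h1
    rw [← hlWD]; exact mono l lam hl0.le hlt h1
  refine ⟨l, ⟨⟨hl0, hl1⟩, left, hlWD, right⟩, ?_⟩
  rintro y ⟨⟨hy0, hy1⟩, hyl, hyeq, hyr⟩
  rcases lt_trichotomy y l with h | h | h
  · exact absurd hyeq (ne_of_lt (by rw [← hlWD]; exact mono y l hy0.le h hl1))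
  · exact h
  · exfalso
    have := hyl l hl0.le h
    rw [hlWD] at this
    exact lt_irrefl _ this
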